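/- arXiv:2401.10764 — 4 statements merged into one kernel-verified Lean document; each statement's English description precedes it below -/
import Mathlib

section
/- If the nonautonomous linear delay differential equation x'(t) = L(t)x_t admits an exponential dichotomy, then it is Hyers–Ulam stable: there exists κ > 0 such that for every δ > 0 and every continuously differentiable y : [0,∞) → ℝ^d (with continuous extension to [-r,∞)) satisfying sup_{t≥0} |y'(t) − L(t)y_t| ≤ δ, there exists a solution x of the equation on [0,∞) with sup_{t≥0} ‖x_t − y_t‖ ≤ κδ. -/
open Set

noncomputable section

/-- The Euclidean state space ℝ^d. -/
abbrev Rd (d : ℕ) : Type := EuclideanSpace ℝ (Fin d)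

/-- The phase space C = C([-r,0], ℝ^d) with the supremum norm. -/
abbrev Ph (d : ℕ) (r : ℝ) : Type := C(Set.Icc (-r) (0:ℝ), Rd d)

/-- The segment x_t ∈ C of a continuous function x : ℝ → ℝ^d, x_t(θ) = x(t+θ). -/
def seg (d : ℕ) (r : ℝ) (x : ℝ → Rd d) (hx : Continuous x) (t : ℝ) : Ph d r :=
  ⟨fun θ => x (t + θ.1), hx.comp (continuous_const.add continuous_subtype_val)⟩

/-- `x` is a solution of x'(t) = L(t)x_t on [s, ∞) (right-hand derivative at s). -/
def IsSol (d : ℕ) (r : ℝ) (L : ℝ → (Ph d r →L[ℝ] Rd d)) (s : ℝ)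
    (x : ℝ → Rd d) (hx : Continuous x) : Prop :=
  ∀ t, s ≤ t → HasDerivWithinAt x (L t (seg d r x hx t)) (Set.Ici s) t

/-- `T` is the solution operator family of x'(t) = L(t)x_t :
for every s ≥ 0 and φ ∈ C there is a solution x on [s,∞) with x_s = φ and x_t = T(t,s)φ. -/
def IsSolOp (d : ℕ) (r : ℝ) (L : ℝ → (Ph d r →L[ℝ] Rd d))
    (T : ℝ → ℝ → (Ph d r →L[ℝ] Ph d r)) : Prop :=
  ∀ s, 0 ≤ s → ∀ φ : Ph d r, ∃ (x : ℝ → Rd d) (hx : Continuous x),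
    IsSol d r L s x hx ∧ seg d r x hx s = φ ∧ ∀ t, s ≤ t → seg d r x hx t = T t s φ

/-- The evolution family property of the solution operators. -/
def Cocycle (d : ℕ) (r : ℝ) (T : ℝ → ℝ → (Ph d r →L[ℝ] Ph d r)) : Prop :=
  (∀ s, 0 ≤ s → T s s = ContinuousLinearMap.id ℝ (Ph d r)) ∧
  ∀ τ t s, 0 ≤ s → s ≤ t → t ≤ τ → T τ s = (T τ t).comp (T t s)

/-- Uniqueness of solutions with a given initial segment at time s. -/
def UniqueSol (d : ℕ) (r : ℝ) (L : ℝ → (Ph d r →L[ℝ] Rd d)) : Prop :=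
  ∀ s, 0 ≤ s → ∀ (x y : ℝ → Rd d) (hx : Continuous x) (hy : Continuous y),
    IsSol d r L s x hx → IsSol d r L s y hy → seg d r x hx s = seg d r y hy s →
    ∀ t, s - r ≤ t → x t = y t

/-- Eq. x'(t) = L(t)x_t is shadowable. -/
def Shadowable (d : ℕ) (r : ℝ) (L : ℝ → (Ph d r →L[ℝ] Rd d)) : Prop :=
  ∀ ε, 0 < ε → ∃ δ, 0 < δ ∧ ∀ (y yd : ℝ → Rd d) (hy : Continuous y),
    ContinuousOn yd (Set.Ici 0) →
    (∀ t, 0 ≤ t → HasDerivWithinAt y (yd t) (Set.Ici 0) t) →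
    (∀ t, 0 ≤ t → ‖yd t - L t (seg d r y hy t)‖ ≤ δ) →
    ∃ (x : ℝ → Rd d) (hx : Continuous x), IsSol d r L 0 x hx ∧
      ∀ t, 0 ≤ t → ‖seg d r x hx t - seg d r y hy t‖ ≤ ε

/-- Eq. x'(t) = L(t)x_t is Hyers–Ulam stable. -/
def HyersUlam (d : ℕ) (r : ℝ) (L : ℝ → (Ph d r →L[ℝ] Rd d)) : Prop :=
  ∃ κ, 0 < κ ∧ ∀ δ, 0 < δ → ∀ (y yd : ℝ → Rd d) (hy : Continuous y),
    ContinuousOn yd (Set.Ici 0) →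
    (∀ t, 0 ≤ t → HasDerivWithinAt y (yd t) (Set.Ici 0) t) →
    (∀ t, 0 ≤ t → ‖yd t - L t (seg d r y hy t)‖ ≤ δ) →
    ∃ (x : ℝ → Rd d) (hx : Continuous x), IsSol d r L 0 x hx ∧
      ∀ t, 0 ≤ t → ‖seg d r x hx t - seg d r y hy t‖ ≤ κ * δ

/-- The stable subspace 𝒮(s) = {φ ∈ C : sup_{t ≥ s} ‖T(t,s)φ‖ < ∞}. -/
def stableSub (d : ℕ) (r : ℝ) (T : ℝ → ℝ → (Ph d r →L[ℝ] Ph d r)) (s : ℝ) :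
    Submodule ℝ (Ph d r) where
  carrier := {φ | ∃ M, ∀ t, s ≤ t → ‖T t s φ‖ ≤ M}
  add_mem' := by
    rintro a b ⟨Ma, hMa⟩ ⟨Mb, hMb⟩
    refine ⟨Ma + Mb, fun t ht => ?_⟩
    calc ‖T t s (a + b)‖ = ‖T t s a + T t s b‖ := by rw [map_add]
    _ ≤ ‖T t s a‖ + ‖T t s b‖ := norm_add_le _ _
    _ ≤ Ma + Mb := add_le_add (hMa t ht) (hMb t ht)
  zero_mem' := ⟨0, fun t ht => by simp⟩
  smul_mem' := by
    rintro c a ⟨Ma, hMa⟩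
    refine ⟨‖c‖ * Ma, fun t ht => ?_⟩
    rw [map_smul]
    have h1 : ‖c • (T t s) a‖ = ‖c‖ * ‖(T t s) a‖ := @norm_smul ℝ (Ph d r) _ _ _ _ c _
    rw [h1]
    exact mul_le_mul_of_nonneg_left (hMa t ht) (norm_nonneg c)

/-- Eq. x'(t) = L(t)x_t admits an exponential dichotomy (with solution operators T). -/
def ExpDich (d : ℕ) (r : ℝ) (T : ℝ → ℝ → (Ph d r →L[ℝ] Ph d r)) : Prop :=
  ∃ (P : ℝ → (Ph d r →L[ℝ] Ph d r)) (D lam : ℝ), 0 < D ∧ 0 < lam ∧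
    (∀ t, 0 ≤ t → (P t).comp (P t) = P t) ∧
    (∀ t s, 0 ≤ s → s ≤ t → (P t).comp (T t s) = (T t s).comp (P s)) ∧
    (∀ t s, 0 ≤ s → s ≤ t →
      Set.BijOn (⇑(T t s)) (LinearMap.ker (P s : Ph d r →ₗ[ℝ] Ph d r) : Set (Ph d r))
        (LinearMap.ker (P t : Ph d r →ₗ[ℝ] Ph d r) : Set (Ph d r))) ∧
    (∀ t s, 0 ≤ s → s ≤ t → ‖(T t s).comp (P s)‖ ≤ D * Real.exp (-lam * (t - s))) ∧
    (∀ t s, 0 ≤ t → t ≤ s → ∀ φ ∈ LinearMap.ker (P t : Ph d r →ₗ[ℝ] Ph d r),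
      ‖φ‖ ≤ D * Real.exp (-lam * (s - t)) * ‖T s t φ‖)


/-!
Cut `[0, ∞)` into steps `[tₙ, tₙ₊₁]` of length `log 2 / Kₙ`, where `Kₙ` bounds `‖L‖` on the step.
By a Grönwall estimate for the delay equation, on each step the pseudosolution `y` stays within
`δ / Kₙ` of the true solution through `y_{tₙ}`, so the segments `y_{tₙ}` form a pseudo-orbit of the
evolution family with defects at most `δ (tₙ₊₁ - tₙ) / log 2`. The dichotomy shadows it by a true
orbit: add the unstable components of all later defects, transported backward, and subtract the
stable components of all earlier defects, transported forward. The exponential decay turns both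
corrections into Riemann sums of `e^{-λ|s-τ|}`, which are `O(δ)` uniformly in time.
-/

section Segments

variable {d : ℕ} {r : ℝ}

@[simp]
lemma seg_apply (x : ℝ → Rd d) (hx : Continuous x) (t : ℝ) (θ : Set.Icc (-r) (0:ℝ)) :
    seg d r x hx t θ = x (t + θ) :=
  rfl

lemma seg_sub (x y : ℝ → Rd d) (hx : Continuous x) (hy : Continuous y) (t : ℝ) :
    seg d r (x - y) (hx.sub hy) t = seg d r x hx t - seg d r y hy t :=
  rfl

lemma continuous_seg (x : ℝ → Rd d) (hx : Continuous x) :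
    Continuous fun t => seg d r x hx t := by
  have hF : Continuous fun p : ℝ × Set.Icc (-r) (0:ℝ) => x (p.1 + p.2) :=
    hx.comp (continuous_fst.add (continuous_subtype_val.comp continuous_snd))
  exact (ContinuousMap.curry ⟨_, hF⟩).continuous

lemma norm_seg_le_gronwallBound (hr : 0 ≤ r) {η g : ℝ → Rd d} (hη : Continuous η) {a b K δ : ℝ}
    (hK : 0 ≤ K) (hδ : 0 ≤ δ) (hzero : ∀ u ∈ Icc (a - r) a, η u = 0)
    (hderiv : ∀ u ∈ Ico a b, HasDerivWithinAt η (g u) (Ici u) u)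
    (hbound : ∀ u ∈ Ico a b, ‖g u‖ ≤ K * ‖seg d r η hη u‖ + δ) :
    ∀ t ∈ Icc a b, ‖seg d r η hη t‖ ≤ gronwallBound 0 K δ (t - a) := by
  set ψ : ℝ → ℝ := fun u => ‖seg d r η hη u‖
  have hψ : Continuous ψ := (continuous_seg η hη).norm
  -- `ζ` dominates `‖η‖` and, being nondecreasing, also the sup norm `ψ` of the segments
  set ζ : ℝ → ℝ := fun v => ∫ u in a..v, K * ψ u + δ
  have hζ : ∀ v, HasDerivAt ζ (K * ψ v + δ) v := fun v =>
    ((continuous_const.mul hψ).add continuous_const).integral_hasStrictDerivAt a v |>.hasDerivAt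
  have hζ_mono : Monotone ζ :=
    monotone_of_hasDerivAt_nonneg hζ fun u => by positivity
  have hζa : ζ a = 0 := intervalIntegral.integral_same
  have hη_le : ∀ v ∈ Icc a b, ‖η v‖ ≤ ζ v :=
    image_norm_le_of_norm_deriv_right_le_deriv_boundary hη.continuousOn hderiv
      (by rw [hζa, hzero a ⟨by linarith, le_rfl⟩, norm_zero]) hζ hbound
  have hψ_le : ∀ v ∈ Icc a b, ψ v ≤ ζ v := by
    intro v hv
    have hζv : 0 ≤ ζ v := hζa ▸ hζ_mono hv.1
    refine (ContinuousMap.norm_le _ hζv).2 fun θ => ?_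
    have hθ := θ.2
    rw [seg_apply]
    rcases le_or_gt (v + θ) a with hva | hav
    · rw [hzero _ ⟨by linarith [hv.1, hθ.1], hva⟩, norm_zero]
      exact hζv
    · exact (hη_le _ ⟨hav.le, by linarith [hv.2, hθ.2]⟩).trans (hζ_mono (by linarith [hθ.2]))
  intro t ht
  have hgron := norm_le_gronwallBound_of_norm_deriv_right_le (f := ζ)
    (fun v _ => (hζ v).continuousAt.continuousWithinAt) (fun v _ => (hζ v).hasDerivWithinAt)
    (by rw [hζa, norm_zero]) (fun v hv => by
      have hψv := hψ_le v (Ico_subset_Icc_self hv)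
      rw [Real.norm_of_nonneg (by positivity), Real.norm_of_nonneg ((norm_nonneg _).trans hψv)]
      gcongr) t ht
  exact (hψ_le t ht).trans ((le_abs_self _).trans hgron)

end Segments

lemma gronwallBound_zero_le_div {K ε x : ℝ} (hK : 0 < K) (hε : 0 ≤ ε)
    (hx : K * x ≤ Real.log 2) : gronwallBound 0 K ε x ≤ ε / K := by
  have hexp : Real.exp (K * x) ≤ 2 := by
    simpa [Real.exp_log] using Real.exp_le_exp.2 hx
  simp only [gronwallBound_of_K_ne_0 hK.ne', zero_mul, zero_add]
  calc ε / K * (Real.exp (K * x) - 1) ≤ ε / K * 1 := by gcongr; linarith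
    _ = ε / K := mul_one _

section Pseudosolutions

variable {d : ℕ} {r : ℝ} {L : ℝ → (Ph d r →L[ℝ] Rd d)} {y yd : ℝ → Rd d} {hy : Continuous y}
  {a b K δ : ℝ}

lemma norm_seg_sub_le_gronwallBound_of_isSol (hr : 0 ≤ r) {x : ℝ → Rd d} {hx : Continuous x}
    (ha : 0 ≤ a) (hK : 0 ≤ K) (hδ : 0 ≤ δ) (hLK : ∀ u ∈ Icc a b, ‖L u‖ ≤ K)
    (hyd : ∀ t, 0 ≤ t → HasDerivWithinAt y (yd t) (Ici 0) t)
    (hdef : ∀ t, 0 ≤ t → ‖yd t - L t (seg d r y hy t)‖ ≤ δ)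
    (hsol : IsSol d r L a x hx) (hinit : seg d r x hx a = seg d r y hy a) :
    ∀ t ∈ Icc a b, ‖seg d r y hy t - seg d r x hx t‖ ≤ gronwallBound 0 K δ (t - a) := by
  simp_rw [← seg_sub]
  refine norm_seg_le_gronwallBound hr (hy.sub hx) hK hδ (g := fun u => yd u - L u (seg d r x hx u))
    (fun u hu => ?_) (fun u hu => ?_) (fun u hu => ?_)
  · have h := DFunLike.congr_fun hinit ⟨u - a, by constructor <;> linarith [hu.1, hu.2]⟩
    simp only [seg_apply, add_sub_cancel] at h
    simp [h]
  · have hu0 : 0 ≤ u := ha.trans hu.1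
    exact ((hyd u hu0).mono (Ici_subset_Ici.2 hu0)).sub
      ((hsol u hu.1).mono (Ici_subset_Ici.2 hu.1))
  · have hsplit : yd u - L u (seg d r x hx u)
        = (yd u - L u (seg d r y hy u)) + L u (seg d r (y - x) (hy.sub hx) u) := by
      rw [seg_sub y x hy hx, map_sub]; abel
    rw [hsplit, add_comm _ δ]
    refine (norm_add_le _ _).trans (add_le_add (hdef u (ha.trans hu.1)) ?_)
    exact ((L u).le_opNorm _).trans (by gcongr; exact hLK u (Ico_subset_Icc_self hu))

lemma norm_seg_sub_solOp_le (hr : 0 ≤ r) {T : ℝ → ℝ → (Ph d r →L[ℝ] Ph d r)}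
    (hT : IsSolOp d r L T) (ha : 0 ≤ a) (hK : 0 < K) (hδ : 0 ≤ δ)
    (hLK : ∀ u ∈ Icc a b, ‖L u‖ ≤ K) (hstep : K * (b - a) ≤ Real.log 2)
    (hyd : ∀ t, 0 ≤ t → HasDerivWithinAt y (yd t) (Ici 0) t)
    (hdef : ∀ t, 0 ≤ t → ‖yd t - L t (seg d r y hy t)‖ ≤ δ) :
    ∀ τ ∈ Icc a b, ‖seg d r y hy τ - T τ a (seg d r y hy a)‖ ≤ δ / K := by
  obtain ⟨x, hx, hsol, hinit, hseg⟩ := hT a ha (seg d r y hy a)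
  intro τ hτ
  rw [← hseg τ hτ.1]
  refine (norm_seg_sub_le_gronwallBound_of_isSol hr ha hK.le hδ hLK hyd hdef hsol hinit τ hτ).trans
    (gronwallBound_zero_le_div hK hδ ?_)
  exact (mul_le_mul_of_nonneg_left (by linarith [hτ.2]) hK.le).trans hstep

end Pseudosolutions

section AdaptiveGrid

variable {F : Type*} [NormedAddCommGroup F] {L : ℝ → F} {s s' u : ℝ}

def localBound (L : ℝ → F) (s : ℝ) : ℝ := 1 + sSup ((fun u => ‖L u‖) '' Icc 0 (s + 1))

lemma one_le_localBound (L : ℝ → F) (s : ℝ) : 1 ≤ localBound L s :=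
  le_add_of_nonneg_right <| Real.sSup_nonneg <| by
    rintro _ ⟨u, -, rfl⟩
    exact norm_nonneg _

lemma bddAbove_norm_image_Icc (hL : ContinuousOn L (Ici 0)) (s : ℝ) :
    BddAbove ((fun u => ‖L u‖) '' Icc 0 s) :=
  (isCompact_Icc.image_of_continuousOn (hL.norm.mono Icc_subset_Ici_self)).bddAbove

lemma norm_le_localBound (hL : ContinuousOn L (Ici 0)) (hu : u ∈ Icc 0 (s + 1)) :
    ‖L u‖ ≤ localBound L s :=
  (le_csSup (bddAbove_norm_image_Icc hL _) ⟨u, hu, rfl⟩).trans (le_add_of_nonneg_left zero_le_one)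

lemma localBound_mono (hL : ContinuousOn L (Ici 0)) (hs : 0 ≤ s) (hss' : s ≤ s') :
    localBound L s ≤ localBound L s' := by
  refine add_le_add_right (csSup_le_csSup (bddAbove_norm_image_Icc hL _) ?_ ?_) 1
  · exact (nonempty_Icc.2 (by linarith)).image _
  · exact image_mono (Icc_subset_Icc_right (by linarith))

def adaptiveGrid (h : ℝ → ℝ) : ℕ → ℝ
  | 0 => 0
  | n + 1 => adaptiveGrid h n + h (adaptiveGrid h n)

variable {h : ℝ → ℝ}

lemma monotone_adaptiveGrid (hpos : ∀ s, 0 < h s) : Monotone (adaptiveGrid h) :=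
  monotone_nat_of_le_succ fun _ => le_add_of_nonneg_right (hpos _).le

lemma adaptiveGrid_nonneg (hpos : ∀ s, 0 < h s) (n : ℕ) : 0 ≤ adaptiveGrid h n :=
  monotone_adaptiveGrid hpos (Nat.zero_le n)

lemma exists_lt_adaptiveGrid (hpos : ∀ s, 0 < h s) (hanti : AntitoneOn h (Ici 0)) (B : ℝ) :
    ∃ n, B < adaptiveGrid h n := by
  by_contra! hle
  have hB : 0 ≤ B := hle 0
  have hlin : ∀ n : ℕ, n * h B ≤ adaptiveGrid h n := by
    intro n
    induction n with
    | zero => simp [adaptiveGrid]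
    | succ n ih =>
      have := hanti (adaptiveGrid_nonneg hpos n) hB (hle n)
      push_cast
      simp only [adaptiveGrid]
      linarith
  obtain ⟨n, hn⟩ := exists_nat_gt (B / h B)
  have := hlin n
  rw [div_lt_iff₀ (hpos B)] at hn
  linarith [hle n]

lemma exists_mem_Icc_of_forall_exists_lt {t : ℕ → ℝ} (ht : ∀ B, ∃ n, B < t n) {τ : ℝ}
    (hτ : t 0 ≤ τ) : ∃ n, τ ∈ Icc (t n) (t (n + 1)) := by
  by_contra! hnot
  have hle : ∀ n, t n ≤ τ := by
    intro n
    induction n with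
    | zero => exact hτ
    | succ n ih => exact le_of_not_ge fun hτn => hnot n ⟨ih, hτn⟩
  obtain ⟨n, hn⟩ := ht τ
  exact (hle n).not_gt hn

end AdaptiveGrid

section Dichotomy

variable {E : Type*} [NormedAddCommGroup E] [NormedSpace ℝ E]

structure IsEvolutionFamily (T : ℝ → ℝ → (E →L[ℝ] E)) : Prop where
  map_self : ∀ s, 0 ≤ s → T s s = ContinuousLinearMap.id ℝ E
  comp : ∀ τ t s, 0 ≤ s → s ≤ t → t ≤ τ → T τ s = (T τ t).comp (T t s)

structure IsExpDichotomy (T : ℝ → ℝ → (E →L[ℝ] E)) (P : ℝ → (E →L[ℝ] E)) (D lam : ℝ) :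
    Prop where
  lam_pos : 0 < lam
  idem : ∀ t, 0 ≤ t → (P t).comp (P t) = P t
  comm : ∀ t s, 0 ≤ s → s ≤ t → (P t).comp (T t s) = (T t s).comp (P s)
  bijOn : ∀ t s, 0 ≤ s → s ≤ t →
    BijOn (T t s) (LinearMap.ker (P s : E →ₗ[ℝ] E)) (LinearMap.ker (P t : E →ₗ[ℝ] E))
  stable : ∀ t s, 0 ≤ s → s ≤ t → ‖(T t s).comp (P s)‖ ≤ D * Real.exp (-lam * (t - s))
  unstable : ∀ t s, 0 ≤ t → t ≤ s → ∀ φ ∈ LinearMap.ker (P t : E →ₗ[ℝ] E),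
    ‖φ‖ ≤ D * Real.exp (-lam * (s - t)) * ‖T s t φ‖

variable {T : ℝ → ℝ → (E →L[ℝ] E)} {P : ℝ → (E →L[ℝ] E)} {D lam : ℝ} {s t c : ℝ}

lemma IsEvolutionFamily.apply_self (hT : IsEvolutionFamily T) (hs : 0 ≤ s) (φ : E) :
    T s s φ = φ := by
  rw [hT.map_self s hs, ContinuousLinearMap.id_apply]

lemma IsEvolutionFamily.apply_apply (hT : IsEvolutionFamily T) {τ : ℝ} (hs : 0 ≤ s) (hst : s ≤ t)
    (htτ : t ≤ τ) (φ : E) : T τ t (T t s φ) = T τ s φ := by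
  rw [hT.comp τ t s hs hst htτ, ContinuousLinearMap.comp_apply]

namespace IsExpDichotomy

lemma proj_proj (h : IsExpDichotomy T P D lam) (ht : 0 ≤ t) (φ : E) : P t (P t φ) = P t φ := by
  rw [← ContinuousLinearMap.comp_apply, h.idem t ht]

lemma proj_sub_proj (h : IsExpDichotomy T P D lam) (ht : 0 ≤ t) (φ : E) :
    P t (φ - P t φ) = 0 := by
  rw [map_sub, h.proj_proj ht, sub_self]

lemma proj_map (h : IsExpDichotomy T P D lam) (hs : 0 ≤ s) (hst : s ≤ t) (φ : E) :
    P t (T t s φ) = T t s (P s φ) := by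
  rw [← ContinuousLinearMap.comp_apply, h.comm t s hs hst, ContinuousLinearMap.comp_apply]

lemma const_nonneg (h : IsExpDichotomy T P D lam) : 0 ≤ D := by
  simpa using (norm_nonneg _).trans (h.stable 0 0 le_rfl le_rfl)

lemma norm_map_proj_le (h : IsExpDichotomy T P D lam) (hs : 0 ≤ s) (hst : s ≤ t) (φ : E) :
    ‖T t s (P s φ)‖ ≤ D * Real.exp (-lam * (t - s)) * ‖φ‖ :=
  ((T t s).comp (P s)).le_opNorm φ |>.trans (by gcongr; exact h.stable t s hs hst)

lemma norm_proj_le (h : IsExpDichotomy T P D lam) (hT : IsEvolutionFamily T) (hs : 0 ≤ s)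
    (φ : E) : ‖P s φ‖ ≤ D * ‖φ‖ := by
  simpa [hT.apply_self hs] using h.norm_map_proj_le hs le_rfl φ

lemma norm_sub_proj_le (h : IsExpDichotomy T P D lam) (hT : IsEvolutionFamily T) (hs : 0 ≤ s)
    (φ : E) : ‖φ - P s φ‖ ≤ (1 + D) * ‖φ‖ := by
  linarith [norm_sub_le φ (P s φ), h.norm_proj_le hT hs φ]

end IsExpDichotomy

/-- The backward evolution on the unstable subspaces: the unique `φ ∈ ker P(s)` with
`T(t,s) φ = (1 - P(t)) ψ`. -/
def unstableBack (T : ℝ → ℝ → (E →L[ℝ] E)) (P : ℝ → (E →L[ℝ] E)) (s t : ℝ) (ψ : E) : E :=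
  Function.invFunOn (T t s) (LinearMap.ker (P s : E →ₗ[ℝ] E)) (ψ - P t ψ)

namespace IsExpDichotomy

lemma sub_proj_mem_ker (h : IsExpDichotomy T P D lam) (ht : 0 ≤ t) (ψ : E) :
    ψ - P t ψ ∈ (LinearMap.ker (P t : E →ₗ[ℝ] E) : Set E) :=
  h.proj_sub_proj ht ψ

lemma proj_unstableBack (h : IsExpDichotomy T P D lam) (hs : 0 ≤ s) (hst : s ≤ t) (ψ : E) :
    P s (unstableBack T P s t ψ) = 0 :=
  (h.bijOn t s hs hst).surjOn.mapsTo_invFunOn (h.sub_proj_mem_ker (hs.trans hst) ψ)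

lemma map_unstableBack (h : IsExpDichotomy T P D lam) (hs : 0 ≤ s) (hst : s ≤ t) (ψ : E) :
    T t s (unstableBack T P s t ψ) = ψ - P t ψ :=
  (h.bijOn t s hs hst).invOn_invFunOn.2 (h.sub_proj_mem_ker (hs.trans hst) ψ)

lemma map_unstableBack_of_le (h : IsExpDichotomy T P D lam) (hT : IsEvolutionFamily T)
    (hs : 0 ≤ s) (hsc : s ≤ c) (hct : c ≤ t) (ψ : E) :
    T c s (unstableBack T P s t ψ) = unstableBack T P c t ψ := by
  have hc : 0 ≤ c := hs.trans hsc
  refine (h.bijOn t c hc hct).injOn ?_ (h.proj_unstableBack hc hct ψ) ?_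
  · change P c (T c s _) = 0
    rw [h.proj_map hs hsc, h.proj_unstableBack hs (hsc.trans hct), map_zero]
  · rw [hT.apply_apply hs hsc hct, h.map_unstableBack hs (hsc.trans hct),
      h.map_unstableBack hc hct]

lemma unstableBack_self (h : IsExpDichotomy T P D lam) (hT : IsEvolutionFamily T) (ht : 0 ≤ t)
    (ψ : E) : unstableBack T P t t ψ = ψ - P t ψ := by
  rw [← h.map_unstableBack ht le_rfl, hT.apply_self ht]

lemma norm_unstableBack_le (h : IsExpDichotomy T P D lam) (hT : IsEvolutionFamily T)
    (hs : 0 ≤ s) (hst : s ≤ t) (ψ : E) :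
    ‖unstableBack T P s t ψ‖ ≤ D * (1 + D) * Real.exp (-lam * (t - s)) * ‖ψ‖ := by
  calc ‖unstableBack T P s t ψ‖
      ≤ D * Real.exp (-lam * (t - s)) * ‖ψ - P t ψ‖ := by
        have := h.unstable s t hs hst _ (h.proj_unstableBack hs hst ψ)
        rwa [h.map_unstableBack hs hst] at this
    _ ≤ D * Real.exp (-lam * (t - s)) * ((1 + D) * ‖ψ‖) := by
        have := h.const_nonneg
        gcongr
        exact h.norm_sub_proj_le hT (hs.trans hst) ψ
    _ = D * (1 + D) * Real.exp (-lam * (t - s)) * ‖ψ‖ := by ring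

end IsExpDichotomy
end Dichotomy

section RiemannSums

variable {lam τ : ℝ} {t : ℕ → ℝ}

lemma step_mul_exp_neg_le (hlam : 0 < lam) (a b τ : ℝ) :
    (b - a) * Real.exp (-lam * (b - τ))
      ≤ (Real.exp (-lam * (a - τ)) - Real.exp (-lam * (b - τ))) / lam := by
  have hsplit :
      Real.exp (-lam * (a - τ)) = Real.exp (-lam * (b - τ)) * Real.exp (lam * (b - a)) := by
    rw [← Real.exp_add]; ring_nf
  rw [hsplit, le_div_iff₀ hlam]
  nlinarith [Real.add_one_le_exp (lam * (b - a)), Real.exp_pos (-lam * (b - τ))]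

lemma step_mul_exp_le {a b : ℝ} (hlam : 0 < lam) (hab : a ≤ b) (hba : b - a ≤ 1) (τ : ℝ) :
    (b - a) * Real.exp (-lam * (τ - b))
      ≤ Real.exp lam / lam * (Real.exp (-lam * (τ - b)) - Real.exp (-lam * (τ - a))) := by
  set z := lam * (b - a)
  have hz : 0 ≤ z := mul_nonneg hlam.le (sub_nonneg.2 hab)
  -- `e^λ - e^(λ-z) = e^(λ-z) (e^z - 1) ≥ z` since `z ≤ λ`
  have hkey : z ≤ Real.exp lam - Real.exp (lam - z) := by
    have h1 : 1 ≤ Real.exp (lam - z) := Real.one_le_exp (by nlinarith)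
    have h2 : Real.exp lam = Real.exp (lam - z) * Real.exp z := by rw [← Real.exp_add]; ring_nf
    nlinarith [Real.add_one_le_exp z]
  have hsplit : Real.exp lam * Real.exp (-lam * (τ - a))
      = Real.exp (lam - z) * Real.exp (-lam * (τ - b)) := by
    simp only [z, ← Real.exp_add]; ring_nf
  rw [div_mul_eq_mul_div, le_div_iff₀ hlam, mul_sub (Real.exp lam), hsplit]
  nlinarith [Real.exp_pos (-lam * (τ - b))]

lemma sum_range_step_mul_exp_le (hlam : 0 < lam) (hmono : Monotone t)
    (hstep : ∀ k, t (k + 1) - t k ≤ 1) {n : ℕ} (hτ : t n ≤ τ) :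
    ∑ k ∈ Finset.range n, (t (k + 1) - t k) * Real.exp (-lam * (τ - t (k + 1)))
      ≤ Real.exp lam / lam := by
  calc ∑ k ∈ Finset.range n, (t (k + 1) - t k) * Real.exp (-lam * (τ - t (k + 1)))
      ≤ ∑ k ∈ Finset.range n, Real.exp lam / lam *
          (Real.exp (-lam * (τ - t (k + 1))) - Real.exp (-lam * (τ - t k))) :=
        Finset.sum_le_sum fun k _ => step_mul_exp_le hlam (hmono k.le_succ) (hstep k) τ
    _ = Real.exp lam / lam * (Real.exp (-lam * (τ - t n)) - Real.exp (-lam * (τ - t 0))) := by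
        rw [← Finset.mul_sum, Finset.sum_range_sub (fun k => Real.exp (-lam * (τ - t k)))]
    _ ≤ Real.exp lam / lam * 1 := by
        gcongr
        have : Real.exp (-lam * (τ - t n)) ≤ 1 := Real.exp_le_one_iff.2 (by nlinarith)
        linarith [Real.exp_pos (-lam * (τ - t 0))]
    _ = Real.exp lam / lam := mul_one _

lemma sum_range_step_mul_exp_neg_le (hlam : 0 < lam) (n m : ℕ) (τ : ℝ) :
    ∑ j ∈ Finset.range m, (t (n + j + 1) - t (n + j)) * Real.exp (-lam * (t (n + j + 1) - τ))
      ≤ Real.exp (-lam * (t n - τ)) / lam := by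
  calc ∑ j ∈ Finset.range m, (t (n + j + 1) - t (n + j)) * Real.exp (-lam * (t (n + j + 1) - τ))
      ≤ ∑ j ∈ Finset.range m,
          (Real.exp (-lam * (t (n + j) - τ)) - Real.exp (-lam * (t (n + (j + 1)) - τ))) / lam :=
        Finset.sum_le_sum fun j _ => step_mul_exp_neg_le hlam _ _ τ
    _ = (Real.exp (-lam * (t n - τ)) - Real.exp (-lam * (t (n + m) - τ))) / lam := by
        rw [← Finset.sum_div, Finset.sum_range_sub' (fun j => Real.exp (-lam * (t (n + j) - τ)))]
        rfl
    _ ≤ Real.exp (-lam * (t n - τ)) / lam := by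
        gcongr
        linarith [Real.exp_pos (-lam * (t (n + m) - τ))]

end RiemannSums

section Summation

variable {E : Type*} [NormedAddCommGroup E] {f : ℕ → E} {g : ℕ → ℝ} {B : ℝ}

lemma summable_of_norm_le_of_sum_range_le [CompleteSpace E] (hfg : ∀ j, ‖f j‖ ≤ g j)
    (hg : ∀ m, ∑ j ∈ Finset.range m, g j ≤ B) : Summable f :=
  .of_norm_bounded (summable_of_sum_range_le (fun j => (norm_nonneg _).trans (hfg j)) hg) hfg

lemma norm_tsum_le_of_norm_le_of_sum_range_le (hfg : ∀ j, ‖f j‖ ≤ g j)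
    (hg : ∀ m, ∑ j ∈ Finset.range m, g j ≤ B) : ‖∑' j, f j‖ ≤ B := by
  have hg0 : ∀ j, 0 ≤ g j := fun j => (norm_nonneg _).trans (hfg j)
  exact (tsum_of_norm_bounded (summable_of_sum_range_le hg0 hg).hasSum hfg).trans
    (Real.tsum_le_of_sum_range_le hg0 hg)

end Summation

section Shadowing

variable {E : Type*} [NormedAddCommGroup E] [NormedSpace ℝ E]
  {T : ℝ → ℝ → (E →L[ℝ] E)} {P : ℝ → (E →L[ℝ] E)} {D lam c τ : ℝ} {t : ℕ → ℝ} {e : ℕ → E}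

def stableSum (T : ℝ → ℝ → (E →L[ℝ] E)) (P : ℝ → (E →L[ℝ] E)) (t : ℕ → ℝ) (e : ℕ → E)
    (n : ℕ) : E :=
  ∑ k ∈ Finset.range n, T (t n) (t (k + 1)) (P (t (k + 1)) (e k))

def unstableSum (T : ℝ → ℝ → (E →L[ℝ] E)) (P : ℝ → (E →L[ℝ] E)) (t : ℕ → ℝ) (e : ℕ → E)
    (n : ℕ) : E :=
  ∑' j, unstableBack T P (t n) (t (n + j + 1)) (e (n + j))

lemma map_stableSum (hT : IsEvolutionFamily T) (ht0 : 0 ≤ t 0) (hmono : Monotone t) {n : ℕ}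
    (hτ : t n ≤ τ) :
    T τ (t n) (stableSum T P t e n)
      = ∑ k ∈ Finset.range n, T τ (t (k + 1)) (P (t (k + 1)) (e k)) := by
  rw [stableSum, map_sum]
  refine Finset.sum_congr rfl fun k hk => ?_
  exact hT.apply_apply (ht0.trans (hmono (Nat.zero_le _)))
    (hmono (Finset.mem_range.1 hk)) hτ _

lemma map_stableSum_succ (hT : IsEvolutionFamily T) (ht0 : 0 ≤ t 0) (hmono : Monotone t)
    (n : ℕ) :
    T (t (n + 1)) (t n) (stableSum T P t e n)
      = stableSum T P t e (n + 1) - P (t (n + 1)) (e n) := by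
  rw [map_stableSum hT ht0 hmono (hmono n.le_succ), stableSum, Finset.sum_range_succ,
    hT.apply_self (ht0.trans (hmono (Nat.zero_le _))), add_sub_cancel_right]

lemma norm_map_stableSum_le (h : IsExpDichotomy T P D lam) (hT : IsEvolutionFamily T)
    (ht0 : 0 ≤ t 0) (hmono : Monotone t) (hstep : ∀ k, t (k + 1) - t k ≤ 1) (hc : 0 ≤ c)
    (he : ∀ k, ‖e k‖ ≤ c * (t (k + 1) - t k)) {n : ℕ} (hτ : t n ≤ τ) :
    ‖T τ (t n) (stableSum T P t e n)‖ ≤ D * c * (Real.exp lam / lam) := by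
  have hD := h.const_nonneg
  rw [map_stableSum hT ht0 hmono hτ]
  refine (norm_sum_le _ _).trans ?_
  calc ∑ k ∈ Finset.range n, ‖T τ (t (k + 1)) (P (t (k + 1)) (e k))‖
      ≤ ∑ k ∈ Finset.range n,
          D * c * ((t (k + 1) - t k) * Real.exp (-lam * (τ - t (k + 1)))) := by
        refine Finset.sum_le_sum fun k hk => ?_
        refine (h.norm_map_proj_le (ht0.trans (hmono (Nat.zero_le _)))
          ((hmono (Finset.mem_range.1 hk)).trans hτ) (e k)).trans ?_
        calc D * Real.exp (-lam * (τ - t (k + 1))) * ‖e k‖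
            ≤ D * Real.exp (-lam * (τ - t (k + 1))) * (c * (t (k + 1) - t k)) := by
              gcongr; exact he k
          _ = _ := by ring
    _ ≤ D * c * (Real.exp lam / lam) := by
        rw [← Finset.mul_sum]
        gcongr
        exact sum_range_step_mul_exp_le h.lam_pos hmono hstep hτ

lemma norm_unstableBack_le_of_le (h : IsExpDichotomy T P D lam) (hT : IsEvolutionFamily T)
    (he : ∀ k, ‖e k‖ ≤ c * (t (k + 1) - t k)) (hτ0 : 0 ≤ τ) {k : ℕ}
    (hτ : τ ≤ t (k + 1)) :
    ‖unstableBack T P τ (t (k + 1)) (e k)‖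
      ≤ D * (1 + D) * c * ((t (k + 1) - t k) * Real.exp (-lam * (t (k + 1) - τ))) := by
  have hD := h.const_nonneg
  refine (h.norm_unstableBack_le hT hτ0 hτ (e k)).trans ?_
  calc D * (1 + D) * Real.exp (-lam * (t (k + 1) - τ)) * ‖e k‖
      ≤ D * (1 + D) * Real.exp (-lam * (t (k + 1) - τ)) * (c * (t (k + 1) - t k)) := by
        gcongr; exact he k
    _ = _ := by ring

lemma summable_unstableBack [CompleteSpace E] (h : IsExpDichotomy T P D lam)
    (hT : IsEvolutionFamily T) (hmono : Monotone t) (hc : 0 ≤ c)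
    (he : ∀ k, ‖e k‖ ≤ c * (t (k + 1) - t k)) (hτ0 : 0 ≤ τ) {n : ℕ} (hτ : τ ≤ t (n + 1)) :
    Summable fun j => unstableBack T P τ (t (n + j + 1)) (e (n + j)) := by
  have hD := h.const_nonneg
  refine summable_of_norm_le_of_sum_range_le
    (B := D * (1 + D) * c * (Real.exp (-lam * (t n - τ)) / lam))
    (fun j => norm_unstableBack_le_of_le h hT he hτ0
    (hτ.trans (hmono (by omega)))) fun m => ?_
  rw [← Finset.mul_sum]
  exact mul_le_mul_of_nonneg_left (sum_range_step_mul_exp_neg_le h.lam_pos n m τ) (by positivity)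

lemma map_unstableSum [CompleteSpace E] (h : IsExpDichotomy T P D lam)
    (hT : IsEvolutionFamily T) (ht0 : 0 ≤ t 0) (hmono : Monotone t) (hc : 0 ≤ c)
    (he : ∀ k, ‖e k‖ ≤ c * (t (k + 1) - t k)) {n : ℕ} (hτ : τ ∈ Icc (t n) (t (n + 1))) :
    T τ (t n) (unstableSum T P t e n)
      = ∑' j, unstableBack T P τ (t (n + j + 1)) (e (n + j)) := by
  have htn : 0 ≤ t n := ht0.trans (hmono (Nat.zero_le n))
  rw [unstableSum, ContinuousLinearMap.map_tsum _
    (summable_unstableBack h hT hmono hc he htn (hmono n.le_succ))]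
  exact tsum_congr fun j =>
    h.map_unstableBack_of_le hT htn hτ.1 (hτ.2.trans (hmono (by omega))) _

lemma norm_map_unstableSum_le [CompleteSpace E] (h : IsExpDichotomy T P D lam)
    (hT : IsEvolutionFamily T) (ht0 : 0 ≤ t 0) (hmono : Monotone t)
    (hstep : ∀ k, t (k + 1) - t k ≤ 1) (hc : 0 ≤ c)
    (he : ∀ k, ‖e k‖ ≤ c * (t (k + 1) - t k)) {n : ℕ} (hτ : τ ∈ Icc (t n) (t (n + 1))) :
    ‖T τ (t n) (unstableSum T P t e n)‖ ≤ D * (1 + D) * c * (Real.exp lam / lam) := by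
  have hD := h.const_nonneg
  have hτ0 : 0 ≤ τ := ht0.trans ((hmono (Nat.zero_le n)).trans hτ.1)
  rw [map_unstableSum h hT ht0 hmono hc he hτ]
  refine norm_tsum_le_of_norm_le_of_sum_range_le (fun j => norm_unstableBack_le_of_le h hT he
    hτ0 (hτ.2.trans (hmono (by omega)))) fun m => ?_
  rw [← Finset.mul_sum]
  gcongr
  refine (sum_range_step_mul_exp_neg_le h.lam_pos n m τ).trans ?_
  have hlam := h.lam_pos
  gcongr
  nlinarith [hτ.2, hstep n]

lemma map_unstableSum_succ [CompleteSpace E] (h : IsExpDichotomy T P D lam)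
    (hT : IsEvolutionFamily T) (ht0 : 0 ≤ t 0) (hmono : Monotone t) (hc : 0 ≤ c)
    (he : ∀ k, ‖e k‖ ≤ c * (t (k + 1) - t k)) (n : ℕ) :
    T (t (n + 1)) (t n) (unstableSum T P t e n)
      = (e n - P (t (n + 1)) (e n)) + unstableSum T P t e (n + 1) := by
  have htn : 0 ≤ t (n + 1) := ht0.trans (hmono (Nat.zero_le _))
  rw [map_unstableSum h hT ht0 hmono hc he ⟨hmono n.le_succ, le_rfl⟩,
    (summable_unstableBack h hT hmono hc he htn le_rfl).tsum_eq_zero_add,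
    add_zero, h.unstableBack_self hT htn, unstableSum]
  congr 1
  exact tsum_congr fun j => by rw [show n + (j + 1) = n + 1 + j by omega]

theorem exists_orbit_near_pseudoOrbit [CompleteSpace E] (h : IsExpDichotomy T P D lam)
    (hT : IsEvolutionFamily T) (ht0 : 0 ≤ t 0) (hmono : Monotone t)
    (hstep : ∀ k, t (k + 1) - t k ≤ 1) (hc : 0 ≤ c) {u : ℕ → E}
    (hu : ∀ k, ‖u (k + 1) - T (t (k + 1)) (t k) (u k)‖ ≤ c * (t (k + 1) - t k)) :
    ∃ v₀, ∀ n, ∀ τ ∈ Icc (t n) (t (n + 1)),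
      ‖T τ (t 0) v₀ - T τ (t n) (u n)‖ ≤ D * (2 + D) * c * (Real.exp lam / lam) := by
  set e : ℕ → E := fun k => u (k + 1) - T (t (k + 1)) (t k) (u k)
  set v : ℕ → E := fun n => u n + unstableSum T P t e n - stableSum T P t e n
  have hv_succ : ∀ n, T (t (n + 1)) (t n) (v n) = v (n + 1) := by
    intro n
    simp only [v, map_sub, map_add, map_unstableSum_succ h hT ht0 hmono hc hu,
      map_stableSum_succ hT ht0 hmono, e]
    abel
  have hv : ∀ n, T (t n) (t 0) (v 0) = v n := by
    intro n
    induction n with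
    | zero => exact hT.apply_self ht0 _
    | succ n ih =>
      rw [← hT.apply_apply ht0 (hmono (Nat.zero_le n)) (hmono n.le_succ), ih, hv_succ]
  refine ⟨v 0, fun n τ hτ => ?_⟩
  rw [← hT.apply_apply ht0 (hmono (Nat.zero_le n)) hτ.1, hv n]
  calc ‖T τ (t n) (v n) - T τ (t n) (u n)‖
      = ‖T τ (t n) (unstableSum T P t e n) - T τ (t n) (stableSum T P t e n)‖ := by
        simp only [v, map_sub, map_add]
        abel_nf
    _ ≤ D * (1 + D) * c * (Real.exp lam / lam) + D * c * (Real.exp lam / lam) :=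
        (norm_sub_le _ _).trans (add_le_add
          (norm_map_unstableSum_le h hT ht0 hmono hstep hc hu hτ)
          (norm_map_stableSum_le h hT ht0 hmono hstep hc hu hτ.1))
    _ = D * (2 + D) * c * (Real.exp lam / lam) := by ring

end Shadowing

lemma exists_grid_adapted {F : Type*} [NormedAddCommGroup F] {L : ℝ → F}
    (hL : ContinuousOn L (Ici 0)) :
    ∃ (t K : ℕ → ℝ), t 0 = 0 ∧ Monotone t ∧ (∀ B, ∃ n, B < t n) ∧
      (∀ n, t (n + 1) - t n ≤ 1) ∧ (∀ n, 1 ≤ K n) ∧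
      (∀ n, ∀ u ∈ Icc (t n) (t (n + 1)), ‖L u‖ ≤ K n) ∧
      ∀ n, t (n + 1) - t n = Real.log 2 / K n := by
  set h : ℝ → ℝ := fun s => Real.log 2 / localBound L s
  have hK0 : ∀ s, 0 < localBound L s := fun s => one_pos.trans_le (one_le_localBound L s)
  have hpos : ∀ s, 0 < h s := fun s => div_pos (Real.log_pos one_lt_two) (hK0 s)
  have hle_one : ∀ s, h s ≤ 1 := fun s =>
    div_le_one_of_le₀ ((Real.log_two_lt_d9.le.trans (by norm_num)).trans
      (one_le_localBound L s)) (hK0 s).le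
  have hanti : AntitoneOn h (Ici 0) := fun s hs s' _ hss' =>
    div_le_div_of_nonneg_left (Real.log_pos one_lt_two).le (hK0 s) (localBound_mono hL hs hss')
  have hstep : ∀ n, adaptiveGrid h (n + 1) - adaptiveGrid h n = h (adaptiveGrid h n) :=
    fun n => add_sub_cancel_left _ _
  refine ⟨adaptiveGrid h, fun n => localBound L (adaptiveGrid h n), rfl,
    monotone_adaptiveGrid hpos, exists_lt_adaptiveGrid hpos hanti, fun n => ?_,
    fun n => one_le_localBound L _, fun n u hu => norm_le_localBound hL ⟨?_, ?_⟩, hstep⟩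
  · exact (hstep n).trans_le (hle_one _)
  · exact (adaptiveGrid_nonneg hpos n).trans hu.1
  · linarith [hu.2, hstep n, hle_one (adaptiveGrid h n)]

lemma Cocycle.isEvolutionFamily {d : ℕ} {r : ℝ} {T : ℝ → ℝ → (Ph d r →L[ℝ] Ph d r)}
    (h : Cocycle d r T) : IsEvolutionFamily T :=
  ⟨h.1, h.2⟩

lemma ExpDich.exists_isExpDichotomy {d : ℕ} {r : ℝ} {T : ℝ → ℝ → (Ph d r →L[ℝ] Ph d r)}
    (h : ExpDich d r T) : ∃ P D lam, IsExpDichotomy T P D lam := by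
  obtain ⟨P, D, lam, -, hlam, hidem, hcomm, hbij, hstab, hunst⟩ := h
  exact ⟨P, D, lam, hlam, hidem, hcomm, hbij, hstab, hunst⟩

/-- If Eq. x'(t) = L(t)x_t admits an exponential dichotomy, then it is
Hyers--Ulam stable. -/
theorem stmt0 (d : ℕ) (r : ℝ) (hr : 0 ≤ r)
    (L : ℝ → (Ph d r →L[ℝ] Rd d)) (hL : ContinuousOn L (Set.Ici 0))
    (T : ℝ → ℝ → (Ph d r →L[ℝ] Ph d r))
    (hT : IsSolOp d r L T) (hcoc : Cocycle d r T)
    (hdich : ExpDich d r T) :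
    HyersUlam d r L := by
  obtain ⟨P, D, lam, hdich⟩ := hdich.exists_isExpDichotomy
  have hD := hdich.const_nonneg
  have hlam := hdich.lam_pos
  have hlog2 : 0 < Real.log 2 := Real.log_pos one_lt_two
  refine ⟨1 + D * (2 + D) * (Real.exp lam / lam) / Real.log 2, by positivity, ?_⟩
  intro δ hδ y yd hy _ hyd hdef
  obtain ⟨t, K, ht0, hmono, hunbdd, hstep, hK1, hLK, hKt⟩ :=
    exists_grid_adapted (F := Ph d r →L[ℝ] Rd d) hL
  have hK0 : ∀ n, 0 < K n := fun n => one_pos.trans_le (hK1 n)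
  have hclose : ∀ n, ∀ τ ∈ Icc (t n) (t (n + 1)),
      ‖seg d r y hy τ - T τ (t n) (seg d r y hy (t n))‖ ≤ δ / K n := fun n =>
    norm_seg_sub_solOp_le hr hT (ht0 ▸ hmono (Nat.zero_le n)) (hK0 n) hδ.le (hLK n)
      (by rw [hKt, mul_div_cancel₀ _ (hK0 n).ne']) hyd hdef
  obtain ⟨v₀, hv₀⟩ := exists_orbit_near_pseudoOrbit hdich hcoc.isEvolutionFamily ht0.ge hmono
    hstep (div_nonneg hδ.le hlog2.le) (u := fun n => seg d r y hy (t n)) fun k =>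
      (hclose k _ ⟨hmono k.le_succ, le_rfl⟩).trans_eq <| by
        rw [hKt]; field_simp
  rw [ht0] at hv₀
  obtain ⟨x, hx, hxsol, -, hxseg⟩ := hT 0 le_rfl v₀
  refine ⟨x, hx, hxsol, fun τ hτ => ?_⟩
  obtain ⟨n, hn⟩ := exists_mem_Icc_of_forall_exists_lt hunbdd (ht0.trans_le hτ)
  rw [hxseg τ hτ]
  calc ‖T τ 0 v₀ - seg d r y hy τ‖
      ≤ ‖T τ 0 v₀ - T τ (t n) (seg d r y hy (t n))‖
        + ‖T τ (t n) (seg d r y hy (t n)) - seg d r y hy τ‖ := norm_sub_le_norm_sub_add_norm_sub ..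
    _ ≤ D * (2 + D) * (δ / Real.log 2) * (Real.exp lam / lam) + δ := by
        rw [norm_sub_rev (T τ (t n) _)]
        exact add_le_add (hv₀ n τ hn) ((hclose n τ hn).trans (div_le_self hδ.le (hK1 n)))
    _ = (1 + D * (2 + D) * (Real.exp lam / lam) / Real.log 2) * δ := by ring
end
end

section
/- For each s ≥ 0, the stable subspace 𝒮(s) is subcomplete: it is the image of a Banach space under a bounded linear operator. Specifically, the set 𝓑' of bounded continuous solutions of x'(t) = L(t)x_t on [s,∞) is a closed subspace of the Banach space 𝓑 of bounded continuous functions [s−r,∞) → ℝ^d with supremum norm, and the map Φ : 𝓑' → C, Φ(x) = x_s, is a bounded linear operator with Φ(𝓑') = 𝒮(s). -/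
/-!
A solution from time `s` is determined by its initial segment, so a bounded continuous `x`
solves the equation on `[s, ∞)` exactly when `x_t = T(t,s) x_s` for all `t ≥ s`. Since
`x ↦ x_t` is a contraction for the supremum norm, this system of equations cuts out a closed
subspace. Conversely, if `T(t,s) φ` stays bounded, the solution through `φ` is bounded on
`[s - r, ∞)`; extended to the left of `s - r` by its value there, it becomes a bounded solution
with initial segment `φ`.
-/

open Set

noncomputable section

open scoped BoundedContinuousFunction

namespace BoundedContinuousFunction

variable {E : Type*} [NormedAddCommGroup E]

theorem exists_eqOn_Ici_of_norm_le {z : ℝ → E} (hz : Continuous z) {a M : ℝ}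
    (hM : ∀ u, a ≤ u → ‖z u‖ ≤ M) : ∃ X : ℝ →ᵇ E, ∀ u, a ≤ u → X u = z u := by
  refine ⟨ofNormedAddCommGroup (fun u => z (max u a)) (hz.comp (continuous_id.max
    continuous_const)) M (fun u => hM _ (le_max_right u a)), fun u hu => ?_⟩
  simp [max_eq_left hu]

end BoundedContinuousFunction

section Segments

variable {d : ℕ} {r : ℝ}

theorem seg_congr {x y : ℝ → Rd d} (hx : Continuous x) (hy : Continuous y) (t : ℝ)
    (h : ∀ u, t - r ≤ u → u ≤ t → x u = y u) :
    seg d r x hx t = seg d r y hy t :=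
  ContinuousMap.ext fun θ => h _ (by linarith [θ.2.1]) (by linarith [θ.2.2])

theorem seg_add {x y : ℝ → Rd d} (hx : Continuous x) (hy : Continuous y)
    (hxy : Continuous (x + y)) (t : ℝ) :
    seg d r (x + y) hxy t = seg d r x hx t + seg d r y hy t :=
  ContinuousMap.ext fun _ => rfl

theorem seg_smul {x : ℝ → Rd d} (hx : Continuous x) (c : ℝ) (hcx : Continuous (c • x))
    (t : ℝ) : seg d r (c • x) hcx t = c • seg d r x hx t :=
  ContinuousMap.ext fun _ => rfl

theorem norm_apply_le_norm_seg {x : ℝ → Rd d} (hx : Continuous x) {t u : ℝ}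
    (h₁ : t - r ≤ u) (h₂ : u ≤ t) : ‖x u‖ ≤ ‖seg d r x hx t‖ := by
  have hθ : u - t ∈ Icc (-r) 0 := ⟨by linarith, by linarith⟩
  simpa [seg] using ContinuousMap.norm_coe_le_norm (seg d r x hx t) ⟨u - t, hθ⟩

theorem norm_apply_le_norm_seg_max (hr : 0 ≤ r) {x : ℝ → Rd d} (hx : Continuous x) {s u : ℝ}
    (hu : s - r ≤ u) : ‖x u‖ ≤ ‖seg d r x hx (max u s)‖ :=
  norm_apply_le_norm_seg hx (by rcases le_total u s with h | h <;> simp [h] <;> linarith)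
    (le_max_left u s)

theorem eq_of_seg_eq (hr : 0 ≤ r) {x y : ℝ → Rd d} (hx : Continuous x) (hy : Continuous y)
    {s : ℝ} (h : ∀ t, s ≤ t → seg d r x hx t = seg d r y hy t) (u : ℝ) (hu : s - r ≤ u) :
    x u = y u := by
  have hθ : u - max u s ∈ Icc (-r) 0 :=
    ⟨by rcases le_total u s with h | h <;> simp [h] <;> linarith, by simp⟩
  simpa [seg] using DFunLike.congr_fun (h _ (le_max_right u s)) ⟨u - max u s, hθ⟩

theorem norm_seg_le_norm (x : ℝ →ᵇ Rd d) (t : ℝ) : ‖seg d r x x.continuous t‖ ≤ ‖x‖ :=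
  (ContinuousMap.norm_le _ (norm_nonneg x)).2 fun _ => x.norm_coe_le_norm _

def segCLM (d : ℕ) (r t : ℝ) : (ℝ →ᵇ Rd d) →L[ℝ] Ph d r :=
  LinearMap.mkContinuous
    { toFun := fun x => seg d r x x.continuous t
      map_add' := fun _ _ => ContinuousMap.ext fun _ => rfl
      map_smul' := fun _ _ => ContinuousMap.ext fun _ => rfl }
    1 (fun x => by simpa using norm_seg_le_norm x t)

@[simp]
theorem segCLM_apply (t : ℝ) (x : ℝ →ᵇ Rd d) : segCLM d r t x = seg d r x x.continuous t :=
  rfl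

end Segments

namespace IsSol

variable {d : ℕ} {r : ℝ} {L : ℝ → (Ph d r →L[ℝ] Rd d)} {s : ℝ}

theorem congr_of_eq (hr : 0 ≤ r) {x y : ℝ → Rd d} (hx : Continuous x) {hy : Continuous y}
    (hsol : IsSol d r L s y hy) (heq : ∀ u, s - r ≤ u → x u = y u) :
    IsSol d r L s x hx := by
  intro t ht
  rw [seg_congr hx hy t fun u h _ => heq u (by linarith)]
  exact (hsol t ht).congr (fun u hu => heq u (by linarith [mem_Ici.1 hu]))
    (heq t (by linarith))

theorem add {x y : ℝ → Rd d} {hx : Continuous x} {hy : Continuous y}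
    (h₁ : IsSol d r L s x hx) (h₂ : IsSol d r L s y hy) (hxy : Continuous (x + y)) :
    IsSol d r L s (x + y) hxy := fun t ht => by
  rw [seg_add hx hy, map_add]
  exact (h₁ t ht).add (h₂ t ht)

theorem const_smul {x : ℝ → Rd d} {hx : Continuous x} (h : IsSol d r L s x hx) (c : ℝ)
    (hcx : Continuous (c • x)) : IsSol d r L s (c • x) hcx := fun t ht => by
  rw [seg_smul hx, map_smul]
  exact (h t ht).const_smul c

end IsSol

section SolutionOperator

variable {d : ℕ} {r : ℝ} {L : ℝ → (Ph d r →L[ℝ] Rd d)} {T : ℝ → ℝ → (Ph d r →L[ℝ] Ph d r)}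
  {s : ℝ}

theorem IsSol.seg_eq_solOp (hT : IsSolOp d r L T) (huniq : UniqueSol d r L) (hs : 0 ≤ s)
    {x : ℝ → Rd d} {hx : Continuous x} (hsol : IsSol d r L s x hx) (t : ℝ) (ht : s ≤ t) :
    seg d r x hx t = T t s (seg d r x hx s) := by
  obtain ⟨z, hz, hzsol, hzs, hzT⟩ := hT s hs (seg d r x hx s)
  have heq := huniq s hs x z hx hz hsol hzsol hzs.symm
  rw [← hzT t ht]
  exact seg_congr hx hz t fun u h _ => heq u (by linarith)

theorem isSol_iff_seg_eq_solOp (hr : 0 ≤ r) (hT : IsSolOp d r L T) (huniq : UniqueSol d r L)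
    (hs : 0 ≤ s) {x : ℝ → Rd d} (hx : Continuous x) :
    IsSol d r L s x hx ↔ ∀ t, s ≤ t → seg d r x hx t = T t s (seg d r x hx s) := by
  refine ⟨fun hsol => hsol.seg_eq_solOp hT huniq hs, fun h => ?_⟩
  obtain ⟨z, hz, hzsol, hzs, hzT⟩ := hT s hs (seg d r x hx s)
  exact hzsol.congr_of_eq hr hx <| eq_of_seg_eq hr hx hz fun t ht => by rw [h t ht, hzT t ht]

theorem isClosed_setOf_isSol (hr : 0 ≤ r) (hT : IsSolOp d r L T) (huniq : UniqueSol d r L)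
    (hs : 0 ≤ s) : IsClosed {x : ℝ →ᵇ Rd d | IsSol d r L s x x.continuous} := by
  have hset : {x : ℝ →ᵇ Rd d | IsSol d r L s x x.continuous} =
      ⋂ t ∈ Ici s, {x | segCLM d r t x = T t s (segCLM d r s x)} := by
    ext x
    simp [isSol_iff_seg_eq_solOp hr hT huniq hs]
  rw [hset]
  exact isClosed_biInter fun t _ =>
    isClosed_eq (segCLM d r t).continuous ((T t s).continuous.comp (segCLM d r s).continuous)

theorem exists_isSol_seg_eq_of_mem_stableSub (hr : 0 ≤ r) (hT : IsSolOp d r L T) (hs : 0 ≤ s)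
    {φ : Ph d r} (hφ : φ ∈ stableSub d r T s) :
    ∃ X : ℝ →ᵇ Rd d, IsSol d r L s X X.continuous ∧ seg d r X X.continuous s = φ := by
  obtain ⟨M, hM⟩ := hφ
  obtain ⟨z, hz, hzsol, hzs, hzT⟩ := hT s hs φ
  have hbound : ∀ u, s - r ≤ u → ‖z u‖ ≤ M := fun u hu =>
    calc ‖z u‖ ≤ ‖seg d r z hz (max u s)‖ := norm_apply_le_norm_seg_max hr hz hu
      _ = ‖T (max u s) s φ‖ := by rw [hzT _ (le_max_right u s)]
      _ ≤ M := hM _ (le_max_right u s)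
  obtain ⟨X, hXz⟩ := BoundedContinuousFunction.exists_eqOn_Ici_of_norm_le hz hbound
  refine ⟨X, hzsol.congr_of_eq hr X.continuous hXz, ?_⟩
  rw [← hzs]
  exact seg_congr _ _ s fun u hu _ => hXz u hu

theorem image_segCLM_setOf_isSol (hr : 0 ≤ r) (hT : IsSolOp d r L T)
    (huniq : UniqueSol d r L) (hs : 0 ≤ s) :
    segCLM d r s '' {x : ℝ →ᵇ Rd d | IsSol d r L s x x.continuous} = stableSub d r T s := by
  ext φ
  constructor
  · rintro ⟨x, hsol, rfl⟩
    refine ⟨‖x‖, fun t ht => ?_⟩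
    rw [segCLM_apply, ← hsol.seg_eq_solOp hT huniq hs t ht]
    exact norm_seg_le_norm x t
  · exact fun hφ => exists_isSol_seg_eq_of_mem_stableSub hr hT hs hφ

end SolutionOperator

theorem stmt5_general (d : ℕ) (r : ℝ) (hr : 0 ≤ r)
    (L : ℝ → (Ph d r →L[ℝ] Rd d))
    (T : ℝ → ℝ → (Ph d r →L[ℝ] Ph d r))
    (hT : IsSolOp d r L T)
    (huniq : UniqueSol d r L) :
    ∀ s, 0 ≤ s →
      IsClosed {x : BoundedContinuousFunction ℝ (Rd d) | IsSol d r L s ⇑x x.continuous} ∧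
      (∀ x y : BoundedContinuousFunction ℝ (Rd d),
        IsSol d r L s ⇑x x.continuous → IsSol d r L s ⇑y y.continuous →
          IsSol d r L s ⇑(x + y) (x + y).continuous) ∧
      (∀ (c : ℝ) (x : BoundedContinuousFunction ℝ (Rd d)),
        IsSol d r L s ⇑x x.continuous → IsSol d r L s ⇑(c • x) (c • x).continuous) ∧
      ∃ Φ : BoundedContinuousFunction ℝ (Rd d) →L[ℝ] Ph d r,
        (∀ x : BoundedContinuousFunction ℝ (Rd d), Φ x = seg d r ⇑x x.continuous s) ∧
        ⇑Φ '' {x : BoundedContinuousFunction ℝ (Rd d) | IsSol d r L s ⇑x x.continuous} =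
          (stableSub d r T s : Set (Ph d r)) := fun s hs =>
  ⟨isClosed_setOf_isSol hr hT huniq hs,
    fun x y hx hy => hx.add hy (x + y).continuous,
    fun c x hx => hx.const_smul c (c • x).continuous,
    segCLM d r s, fun _ => rfl, image_segCLM_setOf_isSol hr hT huniq hs⟩

/-- For each s ≥ 0 the stable subspace 𝒮(s) is subcomplete: the set 𝓑' of
bounded continuous solutions of x'(t) = L(t)x_t on [s,∞) is a closed subspace of
the Banach space of bounded continuous functions with the supremum norm, and
the bounded linear operator Φ(x) = x_s maps 𝓑' onto 𝒮(s). -/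
theorem stmt5 (d : ℕ) (r : ℝ) (hr : 0 ≤ r)
    (L : ℝ → (Ph d r →L[ℝ] Rd d)) (hL : ContinuousOn L (Set.Ici 0))
    (T : ℝ → ℝ → (Ph d r →L[ℝ] Ph d r))
    (hT : IsSolOp d r L T) (hcoc : Cocycle d r T)
    (huniq : UniqueSol d r L) :
    ∀ s, 0 ≤ s →
      IsClosed {x : BoundedContinuousFunction ℝ (Rd d) | IsSol d r L s ⇑x x.continuous} ∧
      (∀ x y : BoundedContinuousFunction ℝ (Rd d),
        IsSol d r L s ⇑x x.continuous → IsSol d r L s ⇑y y.continuous →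
          IsSol d r L s ⇑(x + y) (x + y).continuous) ∧
      (∀ (c : ℝ) (x : BoundedContinuousFunction ℝ (Rd d)),
        IsSol d r L s ⇑x x.continuous → IsSol d r L s ⇑(c • x) (c • x).continuous) ∧
      ∃ Φ : BoundedContinuousFunction ℝ (Rd d) →L[ℝ] Ph d r,
        (∀ x : BoundedContinuousFunction ℝ (Rd d), Φ x = seg d r ⇑x x.continuous s) ∧
        ⇑Φ '' {x : BoundedContinuousFunction ℝ (Rd d) | IsSol d r L s ⇑x x.continuous} =
          (stableSub d r T s : Set (Ph d r)) :=
  stmt5_general d r hr L T hT huniq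

end
end

section
/- Let X be a Banach space and A : ℕ₀ → 𝓛(X), with transition operators U(n,m) = A(n−1)⋯A(m) for n > m and U(m,m) = Id. Suppose (Y(n))_{n∈ℕ₀} is a sequence of subspaces of X such that (i) each Y(n) is the image of a Banach space under a bounded linear operator (subcomplete), (ii) [A(n)]^{-1}(Y(n+1)) = Y(n) for all n (covariant), and (iii) U(n,0)X + Y(n) = X for all n (algebraically regular). If U(n,m) is compact for some n ≥ m, then every Y(n) is closed and all Y(n) have the same finite codimension in X. -/
/-!
Covariance and regularity make `A n` induce linear isomorphisms `X ⧸ Y n ≃ X ⧸ Y (n + 1)`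
(injective since `A n ⁻¹' Y (n + 1) = Y n`, surjective since `U (n + 1) 0 = A n ∘ U n 0`), so all
quotients `X ⧸ Y n` are isomorphic and it suffices to find one of finite dimension.

For `n ≥ m` with `U n m` compact, `U n 0 = U n m ∘ U m 0` is compact and `U n 0 X + Y n = X`.
Write `Y n = Φ Z`. By the open mapping theorem every unit vector is `U n 0 x + Φ z` with
`‖x‖, ‖z‖ ≤ C`; replacing `U n 0 x` by a nearby point of a finite `½`-net of the compact set
`U n 0 (closedBall 0 C)` shows that every `y` lies within `‖y‖ / 2` of a point of `Φ Z + F` with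
preimage of norm `O(‖y‖)`, where `F` is the span of the net. Successive approximation, as in the
proof of the open mapping theorem, then gives `Y n + F = X`.

Finally a subcomplete subspace `Φ Z` with a finite-dimensional algebraic complement `q` is
closed: `(z, f) ↦ Φ z + f` is a quotient map `Z × q → X` and the preimage of `Φ Z` is `Z × 0`.
-/

open Set

noncomputable section

/-- A Banach space `Z` together with a bounded linear operator into `X`. -/
structure BanachInto (X : Type*) [NormedAddCommGroup X] [NormedSpace ℝ X] where
  Z : Type
  [grp : NormedAddCommGroup Z]
  [mod : NormedSpace ℝ Z]
  [comp : CompleteSpace Z]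
  Φ : Z →L[ℝ] X

attribute [instance] BanachInto.grp BanachInto.mod BanachInto.comp

/-- A subspace S of X is subcomplete if it is the image of a Banach space under
a bounded linear operator. -/
def Subcomplete {X : Type*} [NormedAddCommGroup X] [NormedSpace ℝ X] (S : Set X) : Prop :=
  ∃ B : BanachInto X, Set.range ⇑B.Φ = S

open Filter Topology Function

section Approximation

variable {𝕜 E F : Type*} [NormedField 𝕜]
  [NormedAddCommGroup E] [NormedSpace 𝕜 E] [CompleteSpace E]
  [NormedAddCommGroup F] [NormedSpace 𝕜 F]

theorem ContinuousLinearMap.surjective_of_approx_preimage (f : E →L[𝕜] F) {C : ℝ}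
    (h : ∀ y, ∃ x, ‖x‖ ≤ C * ‖y‖ ∧ ‖y - f x‖ ≤ 2⁻¹ * ‖y‖) : Surjective f := by
  intro y
  choose g hg using h
  set r : F → F := fun y => y - f (g y)
  have hr : ∀ n, ‖r^[n] y‖ ≤ 2⁻¹ ^ n * ‖y‖ := by
    intro n
    induction n with
    | zero => simp
    | succ n ih =>
      rw [iterate_succ_apply', pow_succ', mul_assoc]
      exact (hg _).2.trans (by gcongr)
  set u : ℕ → E := fun n => g (r^[n] y)
  have hu : Summable u := by
    refine Summable.of_norm_bounded
      ((summable_geometric_of_lt_one (r := (2⁻¹ : ℝ)) (by norm_num) (by norm_num)).mul_left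
        (max C 0 * ‖y‖)) fun n => ?_
    calc ‖u n‖ ≤ C * ‖r^[n] y‖ := (hg _).1
      _ ≤ max C 0 * (2⁻¹ ^ n * ‖y‖) :=
        mul_le_mul (le_max_left _ _) (hr n) (norm_nonneg _) (le_max_right _ _)
      _ = max C 0 * ‖y‖ * 2⁻¹ ^ n := by ring
  have hpartial : ∀ n, ∑ i ∈ Finset.range n, f (u i) = y - r^[n] y := by
    intro n
    induction n with
    | zero => simp
    | succ n ih => rw [Finset.sum_range_succ, ih, iterate_succ_apply']; simp only [r, u]; abel
  have hlim : Tendsto (fun n => y - r^[n] y) atTop (𝓝 y) := by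
    have hgeom := (tendsto_pow_atTop_nhds_zero_of_lt_one (by norm_num : (0 : ℝ) ≤ 2⁻¹)
      (by norm_num)).mul_const ‖y‖
    rw [zero_mul] at hgeom
    simpa using tendsto_const_nhds.sub (squeeze_zero_norm hr hgeom)
  refine ⟨∑' n, u n, tendsto_nhds_unique ?_ hlim⟩
  simpa only [hpartial] using (hu.hasSum.mapL f).tendsto_sum_nat

end Approximation

theorem ContinuousLinearMap.exists_approx_preimage_of_norm_eq_one {E F : Type*}
    [NormedAddCommGroup E] [NormedSpace ℝ E] [NormedAddCommGroup F] [NormedSpace ℝ F]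
    (f : E →L[ℝ] F) {C ε : ℝ} (h : ∀ u, ‖u‖ = 1 → ∃ x, ‖x‖ ≤ C ∧ ‖u - f x‖ ≤ ε) (y : F) :
    ∃ x, ‖x‖ ≤ C * ‖y‖ ∧ ‖y - f x‖ ≤ ε * ‖y‖ := by
  rcases eq_or_ne y 0 with rfl | hy
  · exact ⟨0, by simp⟩
  obtain ⟨x, hxC, hxε⟩ := h (‖y‖⁻¹ • y) (norm_smul_inv_norm hy)
  have hsub : y - f (‖y‖ • x) = ‖y‖ • (‖y‖⁻¹ • y - f x) := by
    rw [smul_sub, smul_inv_smul₀ (norm_ne_zero_iff.2 hy), map_smul]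
  refine ⟨‖y‖ • x, ?_, ?_⟩
  · rw [norm_smul, norm_norm, mul_comm]
    gcongr
  · rw [hsub, norm_smul, norm_norm, mul_comm]
    gcongr

theorem Submodule.finiteDimensional_quotient_of_sup_eq_top {K V : Type*} [DivisionRing K]
    [AddCommGroup V] [Module K V] {S F : Submodule K V} [FiniteDimensional K F]
    (h : S ⊔ F = ⊤) : FiniteDimensional K (V ⧸ S) := by
  refine Module.Finite.of_surjective (S.mkQ ∘ₗ F.subtype) ?_
  rw [← LinearMap.range_eq_top, LinearMap.range_comp, Submodule.range_subtype,
    Submodule.map_mkQ_eq_top, h]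

section Range

variable {𝕜 Z X : Type*} [NontriviallyNormedField 𝕜]
  [NormedAddCommGroup Z] [NormedSpace 𝕜 Z] [CompleteSpace Z]
  [NormedAddCommGroup X] [NormedSpace 𝕜 X] [CompleteSpace X]

theorem ContinuousLinearMap.isClosed_range_of_isCompl (Φ : Z →L[𝕜] X) {q : Submodule 𝕜 X}
    [CompleteSpace q] (h : IsCompl Φ.range q) :
    IsClosed (Φ.range : Set X) := by
  set Ψ : Z × q →L[𝕜] X := Φ.coprod q.subtypeL
  have hΨ : Surjective Ψ := by
    change Surjective (Ψ : Z × q →ₗ[𝕜] X)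
    have : (q.subtypeL : q →ₗ[𝕜] X) = q.subtype := rfl
    rw [← LinearMap.range_eq_top, ContinuousLinearMap.coe_coprod, LinearMap.range_coprod, this,
      Submodule.range_subtype, h.sup_eq_top]
  have hpre : Ψ ⁻¹' Φ.range = Prod.snd ⁻¹' {0} := by
    ext ⟨z, w⟩
    change Φ z + (w : X) ∈ Φ.range ↔ w = 0
    rw [Submodule.add_mem_iff_right _ (⟨z, rfl⟩ : Φ z ∈ Φ.range)]
    refine ⟨fun hw => ?_, fun hw => hw ▸ zero_mem _⟩
    exact Subtype.ext (Submodule.disjoint_def.1 h.disjoint _ hw w.2)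
  rw [← (Ψ.isQuotientMap hΨ).isClosed_preimage, hpre]
  exact isClosed_singleton.preimage continuous_snd

theorem ContinuousLinearMap.isClosed_range_of_finiteDimensional_quotient (Φ : Z →L[𝕜] X)
    [CompleteSpace 𝕜] [FiniteDimensional 𝕜 (X ⧸ Φ.range)] : IsClosed (Φ.range : Set X) := by
  obtain ⟨q, hq⟩ := Submodule.exists_isCompl Φ.range
  have : FiniteDimensional 𝕜 q := (Submodule.quotientEquivOfIsCompl _ q hq).finiteDimensional
  have : CompleteSpace q := FiniteDimensional.complete 𝕜 q
  exact Φ.isClosed_range_of_isCompl hq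

end Range

section Compact

variable {E Z X : Type*}
  [NormedAddCommGroup E] [NormedSpace ℝ E] [CompleteSpace E]
  [NormedAddCommGroup Z] [NormedSpace ℝ Z] [CompleteSpace Z]
  [NormedAddCommGroup X] [NormedSpace ℝ X] [CompleteSpace X]

theorem ContinuousLinearMap.finiteDimensional_quotient_range_of_isCompactOperator
    (Φ : Z →L[ℝ] X) (V : E →L[ℝ] X) (hV : IsCompactOperator V) (hsup : V.range ⊔ Φ.range = ⊤) :
    FiniteDimensional ℝ (X ⧸ Φ.range) := by
  have hT : Surjective (V.coprod Φ) := by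
    change Surjective (V.coprod Φ : E × Z →ₗ[ℝ] X)
    rw [← LinearMap.range_eq_top, ContinuousLinearMap.coe_coprod, LinearMap.range_coprod, hsup]
  obtain ⟨C, hC0, hC⟩ := (V.coprod Φ).exists_preimage_norm_le hT
  obtain ⟨t, ht, hnet⟩ := Metric.totallyBounded_iff.1
    ((hV.isCompact_closure_image_closedBall C).totallyBounded.subset subset_closure) 2⁻¹
    (by norm_num)
  set F := Submodule.span ℝ t
  have : FiniteDimensional ℝ F := FiniteDimensional.span_of_finite ℝ ht
  have : CompleteSpace F := FiniteDimensional.complete ℝ F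
  have happrox : ∀ u : X, ‖u‖ = 1 →
      ∃ w : Z × F, ‖w‖ ≤ C + ‖V‖ * C + 1 ∧ ‖u - Φ.coprod F.subtypeL w‖ ≤ 2⁻¹ := by
    intro u hu
    obtain ⟨p, rfl, hp⟩ := hC u
    rw [hu, mul_one] at hp
    have hp₁ : ‖p.1‖ ≤ C := (_root_.norm_fst_le p).trans hp
    obtain ⟨y, hyt, hy⟩ := mem_iUnion₂.1 (hnet ⟨p.1, by simpa using hp₁, rfl⟩)
    replace hy : ‖y - V p.1‖ < 2⁻¹ := by rwa [Metric.mem_ball, dist_eq_norm'] at hy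
    refine ⟨(p.2, ⟨y, Submodule.subset_span hyt⟩), ?_, ?_⟩
    · have hVp : ‖V p.1‖ ≤ ‖V‖ * C := (V.le_opNorm p.1).trans (by gcongr)
      have hy' : ‖y‖ ≤ ‖V p.1‖ + ‖y - V p.1‖ := norm_le_insert' y (V p.1)
      refine norm_prod_le_iff.2 ⟨(_root_.norm_snd_le p).trans (by nlinarith [norm_nonneg V]), ?_⟩
      change ‖y‖ ≤ _
      linarith
    · have : V.coprod Φ p - Φ.coprod F.subtypeL (p.2, ⟨y, Submodule.subset_span hyt⟩) =
          -(y - V p.1) := by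
        simp only [coprod_apply, Submodule.subtypeL_apply]; abel
      rw [this, norm_neg]
      exact hy.le
  have hΨ := (Φ.coprod F.subtypeL).surjective_of_approx_preimage
    ((Φ.coprod F.subtypeL).exists_approx_preimage_of_norm_eq_one happrox)
  refine Submodule.finiteDimensional_quotient_of_sup_eq_top (F := F) ?_
  refine Submodule.eq_top_iff'.2 fun x => ?_
  obtain ⟨⟨z, f⟩, rfl⟩ := hΨ x
  exact Submodule.mem_sup.2 ⟨Φ z, ⟨z, rfl⟩, f, f.2, rfl⟩

end Compact

theorem Submodule.bijective_mapQ_of_comap_eq {R M N : Type*} [Ring R] [AddCommGroup M]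
    [Module R M] [AddCommGroup N] [Module R N] {p : Submodule R M} {q : Submodule R N}
    (f : M →ₗ[R] N) (hcomap : q.comap f = p) (hsup : LinearMap.range f ⊔ q = ⊤) :
    Bijective (p.mapQ q f hcomap.ge) := by
  refine ⟨LinearMap.ker_eq_bot.1 ?_, LinearMap.range_eq_top.1 ?_⟩
  · rw [Submodule.ker_mapQ, hcomap, Submodule.mkQ_map_self]
  · rw [Submodule.range_mapQ, Submodule.map_mkQ_eq_top, sup_comm, hsup]

theorem transition_eq_comp {R X : Type*} [Semiring R] [TopologicalSpace X] [AddCommMonoid X]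
    [Module R X] {A : ℕ → X →L[R] X} {U : ℕ → ℕ → X →L[R] X}
    (hU0 : ∀ m, U m m = ContinuousLinearMap.id R X)
    (hUsucc : ∀ n m, m ≤ n → U (n + 1) m = (A n).comp (U n m)) {k m n : ℕ} (hkm : k ≤ m)
    (hmn : m ≤ n) : U n k = (U n m).comp (U m k) := by
  induction n, hmn using Nat.le_induction with
  | base => rw [hU0, ContinuousLinearMap.id_comp]
  | succ n hmn ih => rw [hUsucc n k (hkm.trans hmn), hUsucc n m hmn, ih,
      ContinuousLinearMap.comp_assoc]

namespace Subcomplete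

variable {X : Type*} [NormedAddCommGroup X] [NormedSpace ℝ X] {S : Submodule ℝ X}

theorem exists_range_eq (hS : Subcomplete (S : Set X)) : ∃ B : BanachInto X, B.Φ.range = S :=
  let ⟨B, hB⟩ := hS
  ⟨B, SetLike.coe_injective hB⟩

theorem isClosed_of_finiteDimensional_quotient [CompleteSpace X] (hS : Subcomplete (S : Set X))
    [FiniteDimensional ℝ (X ⧸ S)] : IsClosed (S : Set X) := by
  obtain ⟨B, rfl⟩ := hS.exists_range_eq
  exact B.Φ.isClosed_range_of_finiteDimensional_quotient

theorem finiteDimensional_quotient_of_isCompactOperator [CompleteSpace X] {E : Type*}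
    [NormedAddCommGroup E] [NormedSpace ℝ E] [CompleteSpace E] (hS : Subcomplete (S : Set X))
    {V : E →L[ℝ] X} (hV : IsCompactOperator V) (hsup : V.range ⊔ S = ⊤) : FiniteDimensional ℝ (X ⧸ S) := by
  obtain ⟨B, rfl⟩ := hS.exists_range_eq
  exact B.Φ.finiteDimensional_quotient_range_of_isCompactOperator V hV hsup

end Subcomplete

/-- Schäffer's lemma: a subcomplete algebraically regular covariant sequence of
subspaces for a sequence of operators whose transition operator is compact for
some n ≥ m consists of closed subspaces of constant finite codimension. -/
theorem stmt6 (X : Type*) [NormedAddCommGroup X] [NormedSpace ℝ X] [CompleteSpace X]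
    (A : ℕ → (X →L[ℝ] X)) (U : ℕ → ℕ → (X →L[ℝ] X))
    (hU0 : ∀ m, U m m = ContinuousLinearMap.id ℝ X)
    (hUsucc : ∀ n m, m ≤ n → U (n + 1) m = (A n).comp (U n m))
    (Y : ℕ → Submodule ℝ X)
    (hsub : ∀ n, Subcomplete (Y n : Set X))
    (hcov : ∀ n, (⇑(A n)) ⁻¹' (Y (n + 1) : Set X) = (Y n : Set X))
    (hreg : ∀ n, ∀ x : X, ∃ z : X, ∃ w ∈ Y n, x = U n 0 z + w)
    (hcpt : ∃ n m, m ≤ n ∧ IsCompactOperator (U n m)) :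
    (∀ n, IsClosed (Y n : Set X)) ∧
    (∀ n, FiniteDimensional ℝ (X ⧸ Y n)) ∧
    (∀ n m, Module.finrank ℝ (X ⧸ Y n) = Module.finrank ℝ (X ⧸ Y m)) := by
  obtain ⟨n₀, m₀, hm, hcpt⟩ := hcpt
  have hregular : ∀ n, (U n 0).range ⊔ Y n = ⊤ := fun n => Submodule.eq_top_iff'.2 fun x =>
    let ⟨z, w, hw, hx⟩ := hreg n x
    Submodule.mem_sup.2 ⟨U n 0 z, ⟨z, rfl⟩, w, hw, hx.symm⟩
  have hrange : ∀ n, (U (n + 1) 0).range ≤ (A n).range := by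
    rintro n _ ⟨z, rfl⟩
    exact ⟨U n 0 z, by rw [hUsucc n 0 n.zero_le]; rfl⟩
  have hstep : ∀ n, (X ⧸ Y n) ≃ₗ[ℝ] (X ⧸ Y (n + 1)) := fun n =>
    LinearEquiv.ofBijective _ <| Submodule.bijective_mapQ_of_comap_eq (A n : X →ₗ[ℝ] X)
      (SetLike.coe_injective (hcov n))
      (top_unique ((hregular (n + 1)).ge.trans (sup_le_sup_right (hrange n) _)))
  have hequiv : ∀ n, Nonempty ((X ⧸ Y n) ≃ₗ[ℝ] (X ⧸ Y 0)) := by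
    intro n
    induction n with
    | zero => exact ⟨LinearEquiv.refl ℝ _⟩
    | succ n ih => exact ⟨(hstep n).symm.trans ih.some⟩
  have : FiniteDimensional ℝ (X ⧸ Y n₀) :=
    (hsub n₀).finiteDimensional_quotient_of_isCompactOperator (V := U n₀ 0)
      (by rw [transition_eq_comp hU0 hUsucc m₀.zero_le hm]; exact hcpt.comp_clm _)
      (hregular n₀)
  have hfin : ∀ n, FiniteDimensional ℝ (X ⧸ Y n) := fun n =>
    ((hequiv n₀).some.trans (hequiv n).some.symm).finiteDimensional
  exact ⟨fun n => (hsub n).isClosed_of_finiteDimensional_quotient, hfin,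
    fun n m => (hequiv n).some.finrank_eq.trans (hequiv m).some.finrank_eq.symm⟩

end
end

section
/- Suppose the equation x'(t) = L(t)x_t is shadowable and let 𝒰(s) = T(s,0)𝒰, where C = 𝒮(0) ⊕ 𝒰. Then for every t ≥ s ≥ 0, the restriction T(t,s)|_{𝒰(s)} : 𝒰(s) → 𝒰(t) is a linear bijection. -/
open Set

noncomputable section

/-! A vector `w ∈ 𝒰` killed by some `T(t,0)` has a solution that is continuous on the compact
interval `[-r,t]` and vanishes afterwards, so `w ∈ 𝒮(0) ∩ 𝒰 = 0`. Hence every `T(t,0)` is injective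
on `𝒰`, and by the cocycle identity `T(t,0) = T(t,s) T(s,0)` the map `T(t,s)` is injective on
`𝒰(s)` with image `𝒰(t)`. -/

section

variable {d : ℕ} {r : ℝ}

lemma exists_norm_seg_le_on_Icc (x : ℝ → Rd d) (hx : Continuous x) (a b : ℝ) :
    ∃ M, ∀ τ ∈ Icc a b, ‖seg d r x hx τ‖ ≤ M := by
  obtain ⟨M, hM⟩ := (isCompact_Icc (a := a - r) (b := b)).exists_bound_of_continuousOn
    hx.continuousOn
  refine ⟨max M 0, fun τ hτ => (ContinuousMap.norm_le _ (le_max_right _ _)).2 fun θ => ?_⟩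
  have hmem : τ + θ.1 ∈ Icc (a - r) b := by
    obtain ⟨hθl, hθr⟩ := θ.2
    constructor <;> linarith [hτ.1, hτ.2]
  exact (hM _ hmem).trans (le_max_left _ _)

lemma mem_stableSub_of_apply_eq_zero {L : ℝ → (Ph d r →L[ℝ] Rd d)}
    {T : ℝ → ℝ → (Ph d r →L[ℝ] Ph d r)} (hT : IsSolOp d r L T) (hcoc : Cocycle d r T)
    {s t : ℝ} (hs : 0 ≤ s) (hst : s ≤ t) {φ : Ph d r} (hφ : T t s φ = 0) :
    φ ∈ stableSub d r T s := by
  obtain ⟨x, hx, -, -, hsegT⟩ := hT s hs φ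
  obtain ⟨M, hM⟩ := exists_norm_seg_le_on_Icc (r := r) x hx s t
  refine ⟨M, fun τ hτ => ?_⟩
  rcases le_total τ t with hτt | htτ
  · exact hsegT τ hτ ▸ hM τ ⟨hτ, hτt⟩
  · rw [hcoc.2 τ t s hs hst htτ, ContinuousLinearMap.comp_apply, hφ, map_zero, norm_zero]
    exact (norm_nonneg _).trans (hM s ⟨le_rfl, hst⟩)

lemma injOn_of_disjoint_stableSub {L : ℝ → (Ph d r →L[ℝ] Rd d)}
    {T : ℝ → ℝ → (Ph d r →L[ℝ] Ph d r)} (hT : IsSolOp d r L T) (hcoc : Cocycle d r T)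
    {U : Submodule ℝ (Ph d r)} (hU : Disjoint (stableSub d r T 0) U) {t : ℝ} (ht : 0 ≤ t) :
    InjOn (T t 0) U := by
  intro u hu v hv huv
  have hker : u - v ∈ stableSub d r T 0 :=
    mem_stableSub_of_apply_eq_zero hT hcoc le_rfl ht (by rw [map_sub, huv, sub_self])
  exact sub_eq_zero.1 (Submodule.disjoint_def.1 hU _ hker (U.sub_mem hu hv))

end

theorem stmt9_general (d : ℕ) (r : ℝ)
    (L : ℝ → (Ph d r →L[ℝ] Rd d))
    (T : ℝ → ℝ → (Ph d r →L[ℝ] Ph d r))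
    (hT : IsSolOp d r L T) (hcoc : Cocycle d r T)
    (U : Submodule ℝ (Ph d r))
    (hUcompl : IsCompl (stableSub d r T 0) U) :
    ∀ t s, 0 ≤ s → s ≤ t →
      Set.BijOn (⇑(T t s)) ((U.map (T s 0 : Ph d r →ₗ[ℝ] Ph d r) : Submodule ℝ (Ph d r)) : Set (Ph d r))
        ((U.map (T t 0 : Ph d r →ₗ[ℝ] Ph d r) : Submodule ℝ (Ph d r)) : Set (Ph d r)) := by
  intro t s hs hst
  have hcomp : ∀ φ, T t s (T s 0 φ) = T t 0 φ := fun φ => by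
    rw [hcoc.2 t s 0 le_rfl hs hst, ContinuousLinearMap.comp_apply]
  have himage : (U.map (T t 0 : Ph d r →ₗ[ℝ] Ph d r) : Set (Ph d r)) =
      T t s '' (U.map (T s 0 : Ph d r →ₗ[ℝ] Ph d r)) := by
    simp only [Submodule.map_coe, image_image, ContinuousLinearMap.coe_coe, hcomp]
  rw [himage]
  refine InjOn.bijOn_image ?_
  rintro _ ⟨u, hu, rfl⟩ _ ⟨v, hv, rfl⟩ huv
  simp only [ContinuousLinearMap.coe_coe, hcomp] at huv ⊢
  rw [injOn_of_disjoint_stableSub hT hcoc hUcompl.disjoint (hs.trans hst) hu hv huv]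

/-- If Eq. x'(t) = L(t)x_t is shadowable and 𝒰(s) = T(s,0)𝒰 where
C = 𝒮(0) ⊕ 𝒰, then T(t,s) restricts to a bijection of 𝒰(s) onto 𝒰(t)
for t ≥ s ≥ 0. -/
theorem stmt9 (d : ℕ) (r : ℝ) (hr : 0 ≤ r)
    (L : ℝ → (Ph d r →L[ℝ] Rd d)) (hL : ContinuousOn L (Set.Ici 0))
    (T : ℝ → ℝ → (Ph d r →L[ℝ] Ph d r))
    (hT : IsSolOp d r L T) (hcoc : Cocycle d r T)
    (huniq : UniqueSol d r L)
    (hsh : Shadowable d r L)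
    (U : Submodule ℝ (Ph d r)) (hUfd : FiniteDimensional ℝ ↥U)
    (hUcompl : IsCompl (stableSub d r T 0) U) :
    ∀ t s, 0 ≤ s → s ≤ t →
      Set.BijOn (⇑(T t s)) ((U.map (T s 0 : Ph d r →ₗ[ℝ] Ph d r) : Submodule ℝ (Ph d r)) : Set (Ph d r))
        ((U.map (T t 0 : Ph d r →ₗ[ℝ] Ph d r) : Submodule ℝ (Ph d r)) : Set (Ph d r)) :=
  stmt9_general d r L T hT hcoc U hUcompl

end
end
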